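/- Let u : ℝ × ℝ → ℝ be smooth and define L₂φ = φ_xxx + uφ_x + u_x φ and M₂φ = 9φ_xxxxx + 15uφ_xxx + 30u_x φ_xx + (5u² + 25u_xx)φ_x + (10uu_x + 10u_xxx)φ. If u satisfies the Sawada–Kotera equation u_t + u_xxxxx + 5uu_xxx + 5u_x u_xx + 5u²u_x = 0, then for every smooth φ, u_t·φ_x + u_tx·φ = (M₂L₂ - L₂M₂)φ; that is, (L₂)_t = [M₂, L₂]. -/
import Mathlib

open scoped ContDiff

@[fun_prop]
theorem ctop_deriv {f : ℝ → ℝ} (hf : ContDiff ℝ ∞ f) :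
    ContDiff ℝ ∞ (deriv f) :=
  (contDiff_infty_iff_deriv.mp hf).2

theorem dadd {f g : ℝ → ℝ} (hf : ContDiff ℝ ∞ f)
    (hg : ContDiff ℝ ∞ g) :
    deriv (fun x => f x + g x) = fun x => deriv f x + deriv g x := by
  funext y
  exact deriv_add (hf.differentiable (by norm_num) y) (hg.differentiable (by norm_num) y)

theorem dmul {f g : ℝ → ℝ} (hf : ContDiff ℝ ∞ f)
    (hg : ContDiff ℝ ∞ g) :
    deriv (fun x => f x * g x) = fun x => deriv f x * g x + f x * deriv g x := by
  funext y
  exact deriv_mul (hf.differentiable (by norm_num) y) (hg.differentiable (by norm_num) y)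

theorem dneg {f : ℝ → ℝ} :
    deriv (fun x => -f x) = fun x => -deriv f x := by
  funext y; exact deriv.neg

theorem dcmul {f : ℝ → ℝ} (c : ℝ) (hf : ContDiff ℝ ∞ f) :
    deriv (fun x => c * f x) = fun x => c * deriv f x := by
  funext y; exact deriv_const_mul c (hf.differentiable (by norm_num) y)



/-- Partial derivative in the first (space) variable. -/
noncomputable def dx (f : ℝ → ℝ → ℝ) : ℝ → ℝ → ℝ := fun x t => deriv (fun y => f y t) x

/-- Partial derivative in the second (time) variable. -/
noncomputable def dt (f : ℝ → ℝ → ℝ) : ℝ → ℝ → ℝ := fun x t => deriv (fun s => f x s) t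

/-- Sawada–Kotera Lax operator L₂φ = φ_xxx + uφ_x + u_xφ. -/
noncomputable def L2 (u φ : ℝ → ℝ → ℝ) : ℝ → ℝ → ℝ :=
  fun x t => dx (dx (dx φ)) x t + u x t * dx φ x t + dx u x t * φ x t

/-- Sawada–Kotera operator
M₂φ = 9φ_xxxxx + 15uφ_xxx + 30u_xφ_xx + (5u² + 25u_xx)φ_x + (10uu_x + 10u_xxx)φ. -/
noncomputable def M2 (u φ : ℝ → ℝ → ℝ) : ℝ → ℝ → ℝ :=
  fun x t => 9 * dx (dx (dx (dx (dx φ)))) x t + 15 * u x t * dx (dx (dx φ)) x t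
    + 30 * dx u x t * dx (dx φ) x t
    + (5 * (u x t) ^ 2 + 25 * dx (dx u) x t) * dx φ x t
    + (10 * u x t * dx u x t + 10 * dx (dx (dx u)) x t) * φ x t

set_option maxHeartbeats 4000000 in
/-- If u solves Sawada–Kotera, then (L₂)_t = [M₂, L₂] pointwise on smooth φ. -/
theorem sawada_kotera_lax2 (u : ℝ → ℝ → ℝ)
    (hu : ContDiff ℝ (⊤ : ℕ∞) (fun p : ℝ × ℝ => u p.1 p.2))
    (hSK : ∀ x t : ℝ,
      dt u x t + dx (dx (dx (dx (dx u)))) x t + 5 * u x t * dx (dx (dx u)) x t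
        + 5 * dx u x t * dx (dx u) x t + 5 * (u x t) ^ 2 * dx u x t = 0) :
    ∀ φ : ℝ → ℝ → ℝ, ContDiff ℝ (⊤ : ℕ∞) (fun p : ℝ × ℝ => φ p.1 p.2) →
      ∀ x t : ℝ,
        dt u x t * dx φ x t + dx (dt u) x t * φ x t =
          M2 u (L2 u φ) x t - L2 u (M2 u φ) x t := by
  intro φ hφ x t
  have hu' : ContDiff ℝ ∞ (fun p : ℝ × ℝ => u p.1 p.2) := hu.of_le (by simp)
  have hφ' : ContDiff ℝ ∞ (fun p : ℝ × ℝ => φ p.1 p.2) := hφ.of_le (by simp)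
  have hline : ContDiff ℝ ∞ (fun y : ℝ => (y, t)) := contDiff_id.prodMk contDiff_const
  have hU : ContDiff ℝ ∞ (fun y => u y t) := hu'.comp hline
  have hP : ContDiff ℝ ∞ (fun y => φ y t) := hφ'.comp hline
  have hdtu : ∀ y, dt u y t = -(dx (dx (dx (dx (dx u)))) y t + 5 * u y t * dx (dx (dx u)) y t
      + 5 * dx u y t * dx (dx u) y t + 5 * (u y t) ^ 2 * dx u y t) := fun y => by
    linarith [hSK y t]
  have h2 : dx (dt u) x t = deriv (fun y => -(dx (dx (dx (dx (dx u)))) y t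
      + 5 * u y t * dx (dx (dx u)) y t + 5 * dx u y t * dx (dx u) y t
      + 5 * (u y t) ^ 2 * dx u y t)) x := by
    show deriv (fun y => dt u y t) x = _
    congr 1; funext y; exact hdtu y
  rw [hdtu x, h2]
  simp only [L2, M2, dx, pow_two]
  simp (disch := fun_prop) only [dmul, dadd, dneg, dcmul, deriv_const']
  ring
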